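/- Let G be a connected simple graph on n vertices with Wiener index W and clique number ω satisfying 2 ≤ ω ≤ n−1. Let U ⊆ V(G) be any clique of G with |U| = ω, and set s = Σ_{v∈U} Tr_G(v), a = nω(1−ω) + 4ω(s − W) − ns, and b = 4Wω(ω−1) + 4s(W−s). Then S_𝒬(G) ≥ √(a² − 4b(n−ω)ω) / ((n−ω)ω). -/

import Mathlib

open Finset Matrix

noncomputable def distMatrix {V : Type*} [Fintype V] (G : SimpleGraph V) : Matrix V V ℝ :=
  Matrix.of fun u v => (G.dist u v : ℝ)

theorem distMatrix_isHermitian {V : Type*} [Fintype V] (G : SimpleGraph V) :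
    (distMatrix G).IsHermitian := by
  show (distMatrix G)ᴴ = distMatrix G
  ext i j
  simp [distMatrix, Matrix.conjTranspose_apply, SimpleGraph.dist_comm]

noncomputable def transmission {V : Type*} [Fintype V] (G : SimpleGraph V) (v : V) : ℝ :=
  ∑ u, (G.dist v u : ℝ)

noncomputable def distSLMatrix {V : Type*} [Fintype V] [DecidableEq V] (G : SimpleGraph V) :
    Matrix V V ℝ :=
  Matrix.diagonal (transmission G) + distMatrix G

theorem distSLMatrix_isHermitian {V : Type*} [Fintype V] [DecidableEq V] (G : SimpleGraph V) :
    (distSLMatrix G).IsHermitian :=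
  (Matrix.isHermitian_diagonal _).add (distMatrix_isHermitian G)

noncomputable def maxEig {V : Type*} [Fintype V] [DecidableEq V] {A : Matrix V V ℝ}
    (hA : A.IsHermitian) : ℝ :=
  ⨆ i, hA.eigenvalues i

noncomputable def minEig {V : Type*} [Fintype V] [DecidableEq V] {A : Matrix V V ℝ}
    (hA : A.IsHermitian) : ℝ :=
  ⨅ i, hA.eigenvalues i

noncomputable def distSpread {V : Type*} [Fintype V] [DecidableEq V] (G : SimpleGraph V) : ℝ :=
  maxEig (distMatrix_isHermitian G) - minEig (distMatrix_isHermitian G)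

noncomputable def distSLSpread {V : Type*} [Fintype V] [DecidableEq V] (G : SimpleGraph V) : ℝ :=
  maxEig (distSLMatrix_isHermitian G) - minEig (distSLMatrix_isHermitian G)

/-!
Compress `𝒬(G)` to the plane spanned by the indicator vectors of `U` and of its complement. The
spread of a real symmetric matrix dominates the spread of each of its 2 × 2 compressions: rotating
an orthonormal pair so that it diagonalizes the compression, one vector has Rayleigh quotient the
larger and the other the smaller eigenvalue of the compression. The compression itself is explicit:
distances inside the clique are `1`, and the row sums of `𝒬(G)` are twice the transmissions, so
its entries depend only on `n`, `ω`, `s` and `W`; its discriminant is `a² - 4b(n - ω)ω`.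
-/

lemma Matrix.IsHermitian.dotProduct_mulVec_comm {V : Type*} [Fintype V] {A : Matrix V V ℝ}
    (hA : A.IsHermitian) (x y : V → ℝ) :
    y ⬝ᵥ A *ᵥ x = x ⬝ᵥ A *ᵥ y := by
  rw [← dotProduct_transpose_mulVec, ← conjTranspose_eq_transpose_of_trivial, hA.eq]

section Rayleigh

variable {V : Type*} [Fintype V] [DecidableEq V] {A : Matrix V V ℝ}

lemma Matrix.IsHermitian.exists_dotProduct_mulVec_eq_sum_eigenvalues (hA : A.IsHermitian)
    (x : V → ℝ) :
    ∃ c : V → ℝ, x ⬝ᵥ A *ᵥ x = ∑ i, hA.eigenvalues i * c i ^ 2 ∧ x ⬝ᵥ x = ∑ i, c i ^ 2 := by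
  set P : Matrix V V ℝ := (hA.eigenvectorUnitary : Matrix V V ℝ)
  have hstar : star P = Pᵀ := conjTranspose_eq_transpose_of_trivial P
  have hPPt : P * Pᵀ = 1 := hstar ▸ Unitary.coe_mul_star_self hA.eigenvectorUnitary
  have hxP : x ᵥ* P = Pᵀ *ᵥ x := (mulVec_transpose P x).symm
  refine ⟨Pᵀ *ᵥ x, ?_, ?_⟩
  · conv_lhs => rw [hA.spectral_theorem, Unitary.conjStarAlgAut_apply, hstar, ← mulVec_mulVec,
      ← mulVec_mulVec, dotProduct_mulVec, hxP]
    simp only [dotProduct, mulVec_diagonal, Function.comp_apply, RCLike.ofReal_real_eq_id, id]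
    exact sum_congr rfl fun i _ => by ring
  · calc x ⬝ᵥ x = x ⬝ᵥ (P * Pᵀ) *ᵥ x := by rw [hPPt, one_mulVec]
      _ = _ := by rw [← mulVec_mulVec, dotProduct_mulVec, hxP]; simp only [dotProduct, sq]

lemma minEig_mul_dotProduct_self_le (hA : A.IsHermitian) (x : V → ℝ) :
    minEig hA * (x ⬝ᵥ x) ≤ x ⬝ᵥ A *ᵥ x := by
  obtain ⟨c, hAx, hx⟩ := hA.exists_dotProduct_mulVec_eq_sum_eigenvalues x
  rw [hAx, hx, mul_sum]
  exact sum_le_sum fun i _ => mul_le_mul_of_nonneg_right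
    (ciInf_le (Set.finite_range _).bddBelow i) (sq_nonneg _)

lemma dotProduct_mulVec_le_maxEig_mul (hA : A.IsHermitian) (x : V → ℝ) :
    x ⬝ᵥ A *ᵥ x ≤ maxEig hA * (x ⬝ᵥ x) := by
  obtain ⟨c, hAx, hx⟩ := hA.exists_dotProduct_mulVec_eq_sum_eigenvalues x
  rw [hAx, hx, mul_sum]
  exact sum_le_sum fun i _ => mul_le_mul_of_nonneg_right
    (le_ciSup (Set.finite_range _).bddAbove i) (sq_nonneg _)

lemma sqrt_le_maxEig_sub_minEig_of_orthonormal (hA : A.IsHermitian) {x y : V → ℝ}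
    (hxx : x ⬝ᵥ x = 1) (hyy : y ⬝ᵥ y = 1) (hxy : x ⬝ᵥ y = 0) :
    √((x ⬝ᵥ A *ᵥ x - y ⬝ᵥ A *ᵥ y) ^ 2 + 4 * (x ⬝ᵥ A *ᵥ y) ^ 2) ≤ maxEig hA - minEig hA := by
  set p := x ⬝ᵥ A *ᵥ x
  set q := y ⬝ᵥ A *ᵥ y
  set r := x ⬝ᵥ A *ᵥ y
  have hquad : ∀ α β : ℝ, (α • x + β • y) ⬝ᵥ A *ᵥ (α • x + β • y)
      = α ^ 2 * p + 2 * α * β * r + β ^ 2 * q := by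
    intro α β
    simp only [mulVec_add, mulVec_smul, dotProduct_add, add_dotProduct, smul_dotProduct,
      dotProduct_smul, smul_eq_mul, hA.dotProduct_mulVec_comm x y]
    ring
  have hnorm : ∀ α β : ℝ, (α • x + β • y) ⬝ᵥ (α • x + β • y) = α ^ 2 + β ^ 2 := by
    intro α β
    simp only [dotProduct_add, add_dotProduct, smul_dotProduct, dotProduct_smul, smul_eq_mul,
      hxx, hyy, hxy, dotProduct_comm y x]
    ring
  -- With `z² = (p - q) + 2ri`, the pair `z.re • x + z.im • y`, `-z.im • x + z.re • y` is the
  -- orthogonal basis of `span {x, y}` diagonalizing the compression of `A`.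
  obtain ⟨z, hz⟩ := IsAlgClosed.exists_pow_nat_eq (⟨p - q, 2 * r⟩ : ℂ) two_pos
  have hre : z.re ^ 2 - z.im ^ 2 = p - q := by simpa [sq] using congrArg Complex.re hz
  have him : 2 * z.re * z.im = 2 * r := by
    have := congrArg Complex.im hz
    simp only [sq, Complex.mul_im] at this
    linarith
  set e := z.re ^ 2 + z.im ^ 2
  have hsqrt : √((p - q) ^ 2 + 4 * r ^ 2) = e := by
    rw [← Real.sqrt_sq (by positivity : 0 ≤ e)]
    congr 1
    linear_combination (-(z.re ^ 2 - z.im ^ 2) - (p - q)) * hre - (2 * z.re * z.im + 2 * r) * him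
  have hmax := dotProduct_mulVec_le_maxEig_mul hA (z.re • x + z.im • y)
  have hmin := minEig_mul_dotProduct_self_le hA ((-z.im) • x + z.re • y)
  rw [hquad, hnorm] at hmax hmin
  have he : e * e ≤ (maxEig hA - minEig hA) * e := by
    linear_combination hmax + hmin + (z.re ^ 2 - z.im ^ 2) * hre + (2 * z.re * z.im) * him
  have hspread : minEig hA ≤ maxEig hA := by
    have h1 := dotProduct_mulVec_le_maxEig_mul hA x
    have h2 := minEig_mul_dotProduct_self_le hA x
    rw [hxx] at h1 h2
    linarith
  rw [hsqrt]
  nlinarith [sq_nonneg z.re, sq_nonneg z.im]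

lemma sqrt_div_le_maxEig_sub_minEig_of_orthogonal (hA : A.IsHermitian) {x y : V → ℝ} {k m : ℝ}
    (hk : 0 < k) (hm : 0 < m) (hxx : x ⬝ᵥ x = k) (hyy : y ⬝ᵥ y = m) (hxy : x ⬝ᵥ y = 0) :
    √((m * (x ⬝ᵥ A *ᵥ x) - k * (y ⬝ᵥ A *ᵥ y)) ^ 2 + 4 * k * m * (x ⬝ᵥ A *ᵥ y) ^ 2) / (k * m)
      ≤ maxEig hA - minEig hA := by
  have hk' : (√k)⁻¹ ^ 2 = k⁻¹ := by rw [inv_pow, Real.sq_sqrt hk.le]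
  have hm' : (√m)⁻¹ ^ 2 = m⁻¹ := by rw [inv_pow, Real.sq_sqrt hm.le]
  have h := sqrt_le_maxEig_sub_minEig_of_orthonormal hA (x := (√k)⁻¹ • x) (y := (√m)⁻¹ • y)
    (by rw [smul_dotProduct, dotProduct_smul, hxx, smul_eq_mul, smul_eq_mul, ← mul_assoc, ← sq,
      hk', inv_mul_cancel₀ hk.ne'])
    (by rw [smul_dotProduct, dotProduct_smul, hyy, smul_eq_mul, smul_eq_mul, ← mul_assoc, ← sq,
      hm', inv_mul_cancel₀ hm.ne'])
    (by rw [smul_dotProduct, dotProduct_smul, hxy, smul_zero, smul_zero])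
  simp only [mulVec_smul, smul_dotProduct, dotProduct_smul, smul_eq_mul] at h
  convert h using 1
  rw [← Real.sqrt_sq (mul_pos hk hm).le, ← Real.sqrt_div' _ (sq_nonneg _)]
  congr 1
  field_simp
  rw [show √k ^ 4 = (√k ^ 2) ^ 2 by ring, show √m ^ 4 = (√m ^ 2) ^ 2 by ring,
    Real.sq_sqrt hk.le, Real.sq_sqrt hm.le]
  ring

end Rayleigh

lemma SimpleGraph.IsClique.sum_sum_dist {V : Type*} {G : SimpleGraph V} {U : Finset V}
    (hU : G.IsClique (U : Set V)) :
    ∑ u ∈ U, ∑ v ∈ U, (G.dist u v : ℝ) = #U * (#U - 1) := by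
  have hrow : ∀ u ∈ U, ∑ v ∈ U, (G.dist u v : ℝ) = #U - 1 := by
    intro u hu
    classical
    rw [← add_sum_erase U _ hu, SimpleGraph.dist_self, Nat.cast_zero, zero_add,
      ← Nat.cast_pred (card_pos.mpr ⟨u, hu⟩), ← card_erase_of_mem hu, cast_card]
    refine sum_congr rfl fun v hv => ?_
    rw [SimpleGraph.dist_eq_one_iff_adj.mpr
      (hU hu (mem_of_mem_erase hv) (ne_of_mem_erase hv).symm), Nat.cast_one]
  rw [sum_congr rfl hrow, sum_const, nsmul_eq_mul]

section Indicator

variable {V : Type*} [Fintype V]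

local notation "𝟙" s:max => Set.indicator (↑s : Set V) (1 : V → ℝ)

lemma indicator_one_dotProduct (s : Finset V) (w : V → ℝ) : 𝟙 s ⬝ᵥ w = ∑ v ∈ s, w v := by
  classical
  simp [dotProduct, Set.indicator_apply, Finset.sum_ite_mem]

lemma indicator_one_dotProduct_mulVec_indicator_one (A : Matrix V V ℝ) (s t : Finset V) :
    𝟙 s ⬝ᵥ A *ᵥ 𝟙 t = ∑ u ∈ s, ∑ v ∈ t, A u v := by
  simp only [indicator_one_dotProduct, mulVec, dotProduct_comm (A _)]

lemma indicator_one_dotProduct_indicator_one [DecidableEq V] (s t : Finset V) : 𝟙 s ⬝ᵥ 𝟙 t = #(s ∩ t) := by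
  rw [indicator_one_dotProduct]
  simp [Set.indicator_apply]

lemma indicator_one_add_indicator_one_compl [DecidableEq V] (s : Finset V) : 𝟙 s + 𝟙 (sᶜ) = 1 := by
  rw [Finset.coe_compl, Set.indicator_self_add_compl]

variable (G : SimpleGraph V)

lemma distMatrix_mulVec_one : distMatrix G *ᵥ 1 = transmission G := by
  ext v; simp [mulVec, dotProduct, distMatrix, transmission]

lemma distSLMatrix_mulVec_one [DecidableEq V] : distSLMatrix G *ᵥ 1 = 2 • transmission G := by
  rw [distSLMatrix, add_mulVec, distMatrix_mulVec_one, two_smul]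
  ext v; simp [mulVec_diagonal]

lemma SimpleGraph.IsClique.indicator_one_dotProduct_distSLMatrix_mulVec [DecidableEq V] {U : Finset V}
    (hU : G.IsClique (U : Set V)) :
    𝟙 U ⬝ᵥ distSLMatrix G *ᵥ 𝟙 U = ∑ v ∈ U, transmission G v + #U * (#U - 1) := by
  rw [indicator_one_dotProduct_mulVec_indicator_one, ← hU.sum_sum_dist]
  simp only [distSLMatrix, distMatrix, Matrix.add_apply, diagonal_apply, of_apply, sum_add_distrib]
  congr 1
  exact sum_congr rfl fun u hu => by rw [sum_ite_eq, if_pos hu]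

lemma indicator_one_dotProduct_distSLMatrix_mulVec_add_compl [DecidableEq V] (s : Finset V) :
    𝟙 s ⬝ᵥ distSLMatrix G *ᵥ 𝟙 s + 𝟙 s ⬝ᵥ distSLMatrix G *ᵥ 𝟙 (sᶜ)
      = 2 * ∑ v ∈ s, transmission G v := by
  rw [← dotProduct_add, ← mulVec_add, indicator_one_add_indicator_one_compl,
    distSLMatrix_mulVec_one, indicator_one_dotProduct, mul_sum]
  simp only [Pi.smul_apply, nsmul_eq_mul, Nat.cast_ofNat]

lemma indicator_one_dotProduct_distSLMatrix_mulVec_add_two_mul_add_compl [DecidableEq V]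
    (s : Finset V) :
    𝟙 s ⬝ᵥ distSLMatrix G *ᵥ 𝟙 s + 2 * 𝟙 s ⬝ᵥ distSLMatrix G *ᵥ 𝟙 (sᶜ)
      + 𝟙 (sᶜ) ⬝ᵥ distSLMatrix G *ᵥ 𝟙 (sᶜ) = 2 * ∑ v, transmission G v := by
  have h : (𝟙 s + 𝟙 (sᶜ)) ⬝ᵥ distSLMatrix G *ᵥ (𝟙 s + 𝟙 (sᶜ)) = 2 * ∑ v, transmission G v := by
    rw [indicator_one_add_indicator_one_compl, distSLMatrix_mulVec_one, one_dotProduct, mul_sum]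
    simp only [Pi.smul_apply, nsmul_eq_mul, Nat.cast_ofNat]
  rw [← h, mulVec_add, add_dotProduct, dotProduct_add, dotProduct_add,
    (distSLMatrix_isHermitian G).dotProduct_mulVec_comm (𝟙 s) (𝟙 (sᶜ))]
  ring

end Indicator

theorem stmt14_general {V : Type*} [Fintype V] [DecidableEq V] (G : SimpleGraph V)
    (n : ℕ) (hn : n = Fintype.card V)
    (W : ℝ) (hW : W = (∑ u, transmission G u) / 2)
    (ω : ℕ) (hω2 : 2 ≤ ω) (hωn : ω + 1 ≤ n)
    (U : Finset V) (hU : G.IsNClique ω U)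
    (s a b : ℝ)
    (hs : s = ∑ v ∈ U, transmission G v)
    (ha : a = n*ω*(1 - ω) + 4*ω*(s - W) - n*s)
    (hb : b = 4*W*ω*(ω - 1) + 4*s*(W - s)) :
    Real.sqrt (a^2 - 4*b*(n - ω)*ω) / (((n : ℝ) - ω)*ω) ≤ distSLSpread G := by
  set x : V → ℝ := (U : Set V).indicator 1
  set y : V → ℝ := ((Uᶜ : Finset V) : Set V).indicator 1
  have hcard : (#U : ℝ) = ω := by exact_mod_cast hU.card_eq
  have hxx : x ⬝ᵥ x = ω := by rw [indicator_one_dotProduct_indicator_one, inter_self, hcard]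
  have hyy : y ⬝ᵥ y = n - ω := by
    rw [indicator_one_dotProduct_indicator_one, inter_self, card_compl,
      Nat.cast_sub (card_le_univ U), hn, hcard]
  have hxy : x ⬝ᵥ y = 0 := by rw [indicator_one_dotProduct_indicator_one, inter_compl]; simp
  have hk : (0 : ℝ) < ω := by exact_mod_cast (by omega : 0 < ω)
  have hm : (0 : ℝ) < n - ω := sub_pos.mpr (by exact_mod_cast (by omega : ω < n))
  set p := x ⬝ᵥ distSLMatrix G *ᵥ x
  set q := y ⬝ᵥ distSLMatrix G *ᵥ y
  set r := x ⬝ᵥ distSLMatrix G *ᵥ y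
  have hp : p = s + ω * (ω - 1) := by
    rw [hs, ← hcard]; exact hU.isClique.indicator_one_dotProduct_distSLMatrix_mulVec G
  have hr : r = s - ω * (ω - 1) := by
    linarith [indicator_one_dotProduct_distSLMatrix_mulVec_add_compl G U]
  have hq : q = 4 * W - 3 * s + ω * (ω - 1) := by
    linarith [indicator_one_dotProduct_distSLMatrix_mulVec_add_two_mul_add_compl G U]
  calc √(a ^ 2 - 4 * b * (n - ω) * ω) / ((n - ω) * ω)
      = √(((n - ω) * p - ω * q) ^ 2 + 4 * ω * (n - ω) * r ^ 2) / (ω * (n - ω)) := by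
        rw [mul_comm ((n : ℝ) - ω), hp, hq, hr, ha, hb]
        congr 2; ring
    _ ≤ distSLSpread G :=
        sqrt_div_le_maxEig_sub_minEig_of_orthogonal (distSLMatrix_isHermitian G) hk hm hxx hyy hxy

theorem stmt14 {V : Type*} [Fintype V] [DecidableEq V] (G : SimpleGraph V)
    (hconn : G.Connected)
    (n : ℕ) (hn : n = Fintype.card V)
    (W : ℝ) (hW : W = (∑ u, transmission G u) / 2)
    (ω : ℕ) (hω : G.cliqueNum = ω) (hω2 : 2 ≤ ω) (hωn : ω + 1 ≤ n)
    (U : Finset V) (hU : G.IsNClique ω U)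
    (s a b : ℝ)
    (hs : s = ∑ v ∈ U, transmission G v)
    (ha : a = n*ω*(1 - ω) + 4*ω*(s - W) - n*s)
    (hb : b = 4*W*ω*(ω - 1) + 4*s*(W - s)) :
    Real.sqrt (a^2 - 4*b*(n - ω)*ω) / (((n : ℝ) - ω)*ω) ≤ distSLSpread G :=
  stmt14_general G n hn W hW ω hω2 hωn U hU s a b hs ha hb
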